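/- Let f₁ = ![1, 1, -1, -1] and f₂ = ![1, -1, 1, -1] in Fin 4 → ℝ, let A₁, A₂ : Matrix (Fin 4) (Fin 4) ℝ be the adjacency matrices of the single-edge graphs G₁ (edge {0,3}) and G₂ (edge {1,2}), and let M : Matrix (Fin 4) (Fin 4) ℝ be the target-walk mask of the subset S = {0, 1}, i.e. M i j = 1 if i ∈ {0, 1} and M i j = 0 otherwise. Then ∑_{i ∈ ({0,1} : Finset (Fin 4))} ((A₁^2 ∘ M) *ᵥ f₂) i = 1 while ∑_{i ∈ ({0,1} : Finset (Fin 4))} ((A₂^2 ∘ M) *ᵥ f₂) i = -1. Hence the masked dynamic feature with subset S separates G₁ from G₂, establishing that TREE-G with subsets is strictly more expressive than TREE-G without subsets on this pair (second half of Lemma 4.3). -/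
import Mathlib

open Matrix

/-- First coordinate feature: the `x`-axis position of each vertex. -/
def f₁ : Fin 4 → ℝ := ![1, 1, -1, -1]

/-- Second coordinate feature: the `y`-axis position of each vertex. -/
def f₂ : Fin 4 → ℝ := ![1, -1, 1, -1]

/-- Adjacency matrix of `G₁`: the single undirected edge `{0, 3}`. -/
def A₁ : Matrix (Fin 4) (Fin 4) ℝ :=
  !![0, 0, 0, 1; 0, 0, 0, 0; 0, 0, 0, 0; 1, 0, 0, 0]

/-- Adjacency matrix of `G₂`: the single undirected edge `{1, 2}`. -/
def A₂ : Matrix (Fin 4) (Fin 4) ℝ :=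
  !![0, 0, 0, 0; 0, 0, 1, 0; 0, 1, 0, 0; 0, 0, 0, 0]

/-- The target-walk mask of the subset `S = {0, 1}`: `M i j = 1` if `i ∈ {0, 1}`
and `0` otherwise. -/
def M : Matrix (Fin 4) (Fin 4) ℝ :=
  fun i _ => if i = 0 ∨ i = 1 then 1 else 0

/-- The masked dynamic feature with subset `S = {0, 1}` separates `G₁` from `G₂`:
the subset-restricted sums take values `1` and `-1` respectively. -/
theorem masked_feature_separates :
    (∑ i ∈ ({0, 1} : Finset (Fin 4)), ((Matrix.hadamard (A₁ ^ 2) M) *ᵥ f₂) i = 1) ∧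
    (∑ i ∈ ({0, 1} : Finset (Fin 4)), ((Matrix.hadamard (A₂ ^ 2) M) *ᵥ f₂) i = -1) := by
  constructor <;>
  · simp [A₁, A₂, M, f₂, Matrix.hadamard, pow_two, Matrix.mulVec, Matrix.mul_apply,
      Fin.sum_univ_four, dotProduct]
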